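/- Let G be a countable discrete group, residually finite with respect to a sequence of finite-index normal subgroups G = N₀ ⊇ N₁ ⊇ N₂ ⊇ ⋯ with ⋂_{i≥1} N_i = {1}, equipped with a proper length function and the induced left-invariant metric, each G/N_i carrying the quotient metric. Then the box space □_{N_i}G has sFDC if and only if G has equi-variant sFDC with respect to {N_i}. -/

import Mathlib

open Set Filter
open scoped symmDiff

namespace FDCPaper

/-! ### Proper functions `[0,∞) → ℝ` : preimages of bounded sets are bounded. -/

def ProperFn (ρ : ℝ → ℝ) : Prop :=
  ∀ C : ℝ, ∃ M : ℝ, ∀ t : ℝ, 0 ≤ t → |ρ t| ≤ C → t ≤ M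

/-! ### Length functions on groups and the induced metrics -/

structure IsLengthFunction {G : Type*} [Group G] (l : G → ℝ) : Prop where
  nonneg : ∀ g, 0 ≤ l g
  len_one : l 1 = 0
  len_inv : ∀ g, l g⁻¹ = l g
  subadd : ∀ g h, l (g * h) ≤ l g + l h
  eq_one : ∀ g, l g = 0 → g = 1
  proper : ∀ R : ℝ, {g : G | l g ≤ R}.Finite

/-- The left invariant distance induced by a length function. -/
def dl {G : Type*} [Group G] (l : G → ℝ) (g h : G) : ℝ := l (g⁻¹ * h)

/-- The quotient distance on `G ⧸ N`:
`d([g],[h]) = inf { d_G(g n₁, h n₂) : n₁, n₂ ∈ N }`. -/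
noncomputable def qdist {G : Type*} [Group G] (l : G → ℝ) (N : Subgroup G)
    (x y : G ⧸ N) : ℝ :=
  sInf {r : ℝ | ∃ g h : G, (QuotientGroup.mk g : G ⧸ N) = x ∧
    (QuotientGroup.mk h : G ⧸ N) = y ∧ r = dl l g h}

/-- The quotient length on `G ⧸ N` : `l̄([g]) = inf { l(h) : [h] = [g] }`. -/
noncomputable def qlen {G : Type*} [Group G] (l : G → ℝ) (N : Subgroup G) (x : G ⧸ N) : ℝ :=
  sInf {r : ℝ | ∃ g : G, (QuotientGroup.mk g : G ⧸ N) = x ∧ r = l g}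

/-! ### Families of subsets of a single ambient space, decompositions -/

section Single

variable {α : Type*}

/-- The open ball, for a distance function. -/
def ballS (d : α → α → ℝ) (c : α) (R : ℝ) : Set α := {x | d c x < R}

/-- An `r`-disjoint family of subsets. -/
def rDisjS (d : α → α → ℝ) (r : ℝ) (P : Set (Set α)) : Prop :=
  ∀ A ∈ P, ∀ B ∈ P, A ≠ B → ∀ x ∈ A, ∀ y ∈ B, r ≤ d x y

/-- A uniformly bounded family of subsets. -/
def BddS (d : α → α → ℝ) (𝒴 : Set (Set α)) : Prop :=
  ∃ C : ℝ, ∀ Y ∈ 𝒴, ∀ x ∈ Y, ∀ y ∈ Y, d x y ≤ C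

/-- `X = X₀ ∪ X₁` where each `Xᵢ` is an `r`-disjoint union of members of `𝒴`. -/
def PieceDecomp (d : α → α → ℝ) (r : ℝ) (X : Set α) (𝒴 : Set (Set α)) : Prop :=
  ∃ P₀ P₁ : Set (Set α),
    X = ⋃₀ P₀ ∪ ⋃₀ P₁ ∧ rDisjS d r P₀ ∧ rDisjS d r P₁ ∧ ∀ A ∈ P₀ ∪ P₁, A ∈ 𝒴

/-- `X = X₀ ∪ X₁`, `Xᵢ = ∪ⱼ Xᵢⱼ` with `Xᵢⱼ ∈ 𝒴`, and the cover `{Xᵢⱼ}` of `X` has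
Lebesgue number `≥ R`. -/
def PieceFullDecomp (d : α → α → ℝ) (R : ℝ) (X : Set α) (𝒴 : Set (Set α)) : Prop :=
  ∃ P₀ P₁ : Set (Set α),
    X = ⋃₀ P₀ ∪ ⋃₀ P₁ ∧
    (∀ x ∈ X, ∃ A ∈ P₀ ∪ P₁, {y ∈ X | d x y < R} ⊆ A) ∧
    ∀ A ∈ P₀ ∪ P₁, A ∈ 𝒴

/-- `𝒳` is `r`-decomposable over `𝒴` (families of subsets of a single space). -/
def DecompS (d : α → α → ℝ) (r : ℝ) (𝒳 𝒴 : Set (Set α)) : Prop :=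
  ∀ X ∈ 𝒳, PieceDecomp d r X 𝒴

/-- `𝒳` is `R`-full decomposable over `𝒴`. -/
def FullDecompS (d : α → α → ℝ) (R : ℝ) (𝒳 𝒴 : Set (Set α)) : Prop :=
  ∀ X ∈ 𝒳, PieceFullDecomp d R X 𝒴

/-- Straight finite decomposition complexity of a family of subsets of a space. -/
def sFDCS (d : α → α → ℝ) (𝒳 : Set (Set α)) : Prop :=
  ∀ R : ℕ → ℝ, (∀ n, 0 < R n) → StrictMono R →
    ∃ (m : ℕ) (𝒴 : ℕ → Set (Set α)), 𝒴 0 = 𝒳 ∧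
      (∀ i < m, DecompS d (R i) (𝒴 i) (𝒴 (i + 1))) ∧ BddS d (𝒴 m)

/-- Straight FDC of a metric space, i.e. of the singleton family `{X}`. -/
def SpaceSFDC (d : α → α → ℝ) : Prop := sFDCS d {Set.univ}

end Single

/-! ### General metric families and finite decomposition complexity -/

/-- A metric family, realized as a set of subsets of an indexed collection of spaces
`Z i`, each equipped with its distance function. -/
abbrev Fam {ι : Type*} (Z : ι → Type*) := Set ((i : ι) × Set (Z i))

section Families

variable {ι : Type*} {Z : ι → Type*}

/-- A (uniformly) bounded metric family. -/
def Bdd (d : ∀ i, Z i → Z i → ℝ) (𝒴 : Fam Z) : Prop :=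
  ∃ C : ℝ, ∀ p ∈ 𝒴, ∀ x ∈ p.2, ∀ y ∈ p.2, d p.1 x y ≤ C

/-- The metric family `𝒳` is `r`-decomposable over the metric family `𝒴`. -/
def Decomp (d : ∀ i, Z i → Z i → ℝ) (r : ℝ) (𝒳 𝒴 : Fam Z) : Prop :=
  ∀ p ∈ 𝒳, PieceDecomp (d p.1) r p.2
    {A : Set (Z p.1) | (⟨p.1, A⟩ : (i : ι) × Set (Z i)) ∈ 𝒴}

/-- The collections `D_α` : `D_0` consists of the bounded families, and for `α > 0`,
`𝒳 ∈ D_α` iff for every `r > 0` there are `β < α` and `𝒴 ∈ D_β` with `𝒳 →_r 𝒴`. -/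
def DColl (d : ∀ i, Z i → Z i → ℝ) (α : Ordinal.{0}) : Set (Fam Z) :=
  {𝒳 | (α = 0 ∧ Bdd d 𝒳) ∨
    (α ≠ 0 ∧ ∀ r : ℝ, 0 < r →
      ∃ β : Ordinal.{0}, ∃ _ : β < α, ∃ 𝒴 ∈ DColl d β, Decomp d r 𝒳 𝒴)}
  termination_by α

/-- A metric family has finite decomposition complexity if it belongs to some `D_α`. -/
def HasFDC (d : ∀ i, Z i → Z i → ℝ) (𝒳 : Fam Z) : Prop :=
  ∃ α : Ordinal.{0}, 𝒳 ∈ DColl d α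

end Families

/-- FDC of a single metric space, i.e. of the singleton family `{X}`. -/
def SpaceFDC {X : Type*} (d : X → X → ℝ) : Prop :=
  HasFDC (ι := Unit) (Z := fun _ => X) (fun _ => d) {p | p.2 = Set.univ}

/-! ### Coarse disjoint unions and box spaces -/

/-- The diameter of a space with a distance function. -/
noncomputable def diamD {X : Type*} (d : X → X → ℝ) : ℝ :=
  sSup {r : ℝ | ∃ x y : X, r = d x y}

/-- The coarse disjoint union distance: each piece keeps its own distance, and
`d(x,y) = diam Xᵢ + diam Xⱼ + i + j` for `x ∈ Xᵢ`, `y ∈ Xⱼ` with `i ≠ j`. -/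
noncomputable def cuDist {X : ℕ → Type*} (d : ∀ i, X i → X i → ℝ) :
    (Σ i, X i) → (Σ i, X i) → ℝ := fun x y =>
  if h : x.1 = y.1 then d y.1 (h ▸ x.2) y.2
  else diamD (d x.1) + diamD (d y.1) + (x.1 : ℝ) + (y.1 : ℝ)

/-- The box space `□_{Nᵢ} G` : the coarse disjoint union of the quotients `G ⧸ Nᵢ`. -/
noncomputable def boxDist {G : Type*} [Group G] (l : G → ℝ) (N : ℕ → Subgroup G) :
    (Σ i, G ⧸ N i) → (Σ i, G ⧸ N i) → ℝ :=
  cuDist (fun i => qdist l (N i))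

/-! ### Equivariance -/

section EquivGroup

variable {G : Type*} [Group G]

/-- A family of subsets of `G` is `H`-invariant if it is closed under right
translation by elements of `H`. -/
def RInvFam (H : Subgroup G) (P : Set (Set G)) : Prop :=
  ∀ U ∈ P, ∀ h ∈ H, (fun g => g * h) '' U ∈ P

/-- An `H`-invariant decomposition of a single subset of `G`. -/
def PieceDecompInv (d : G → G → ℝ) (H : Subgroup G) (r : ℝ) (X : Set G)
    (𝒴 : Set (Set G)) : Prop :=
  ∃ P₀ P₁ : Set (Set G),
    X = ⋃₀ P₀ ∪ ⋃₀ P₁ ∧ rDisjS d r P₀ ∧ rDisjS d r P₁ ∧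
    (∀ A ∈ P₀ ∪ P₁, A ∈ 𝒴) ∧ RInvFam H P₀ ∧ RInvFam H P₁

/-- An `H`-invariant decomposition `𝒳 →_r 𝒴` of families of subsets of `G`. -/
def DecompSInv (d : G → G → ℝ) (H : Subgroup G) (r : ℝ) (𝒳 𝒴 : Set (Set G)) : Prop :=
  ∀ X ∈ 𝒳, PieceDecompInv d H r X 𝒴

/-- An `H`-invariant full decomposition of a single subset of `G`. -/
def PieceFullDecompInv (d : G → G → ℝ) (H : Subgroup G) (R : ℝ) (X : Set G)
    (𝒴 : Set (Set G)) : Prop :=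
  ∃ P₀ P₁ : Set (Set G),
    X = ⋃₀ P₀ ∪ ⋃₀ P₁ ∧
    (∀ x ∈ X, ∃ A ∈ P₀ ∪ P₁, {y ∈ X | d x y < R} ⊆ A) ∧
    (∀ A ∈ P₀ ∪ P₁, A ∈ 𝒴) ∧ RInvFam H P₀ ∧ RInvFam H P₁

/-- An `H`-invariant full decomposition `𝒳 ↝_R 𝒴` of families of subsets of `G`. -/
def FullDecompSInv (d : G → G → ℝ) (H : Subgroup G) (R : ℝ) (𝒳 𝒴 : Set (Set G)) : Prop :=
  ∀ X ∈ 𝒳, PieceFullDecompInv d H R X 𝒴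

/-- `G` has equi-variant straight FDC with respect to the sequence `{Nᵢ}` : for any
increasing sequence `R₁ < R₂ < ⋯` of positive reals there are `m`, `K` and a chain
of decompositions `{G} →_{R₁} 𝒴₁ →_{R₂} ⋯ →_{R_m} 𝒴_m` with `𝒴_m` bounded and the
last decomposition `N_K`-invariant. -/
def EquivSFDC (d : G → G → ℝ) (N : ℕ → Subgroup G) : Prop :=
  ∀ R : ℕ → ℝ, (∀ n, 0 < R n) → StrictMono R →
    ∃ m K : ℕ, 0 < m ∧ ∃ 𝒴 : ℕ → Set (Set G), 𝒴 0 = {Set.univ} ∧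
      (∀ i < m, DecompS d (R i) (𝒴 i) (𝒴 (i + 1))) ∧ BddS d (𝒴 m) ∧
      DecompSInv d (N K) (R (m - 1)) (𝒴 (m - 1)) (𝒴 m)

end EquivGroup

/-! ### Stable FDC -/

/-- The distances on the members of the family `{H/K : K ⊴ H ≤ G}` : `H` carries the
metric induced from `G` and `H/K` the corresponding quotient metric. -/
noncomputable def stableD {G : Type*} [Group G] (l : G → ℝ) :
    ∀ p : Σ H : Subgroup G, Subgroup ↥H, (↥p.1 ⧸ p.2) → (↥p.1 ⧸ p.2) → ℝ :=
  fun p => qdist (fun h : ↥p.1 => l ↑h) p.2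

/-- `G` has stable FDC if the family `{H/K : K ⊴ H ≤ G}` has FDC. -/
def StableFDC (G : Type*) [Group G] (l : G → ℝ) : Prop :=
  HasFDC (stableD l)
    {q : (p : Σ H : Subgroup G, Subgroup ↥H) × Set (↥p.1 ⧸ p.2) |
      q.1.2.Normal ∧ q.2 = Set.univ}

/-! ### Coarse equivalence of metric families -/

/-- A coarse equivalence between two indexed metric families: a family of maps
`f i : Z i → W (σ i)` which is uniformly expansive and effectively proper, admitting
a coarse embedding `g i : W (σ i) → Z i` in the opposite direction with
`d(x, g(f x)) ≤ C` and `d(y, f(g y)) ≤ C`. -/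
def FamCoarseEquiv {ι κ : Type*} {Z : ι → Type*} {W : κ → Type*}
    (d : ∀ i, Z i → Z i → ℝ) (e : ∀ j, W j → W j → ℝ) : Prop :=
  ∃ (σ : ι → κ) (f : ∀ i, Z i → W (σ i)) (g : ∀ i, W (σ i) → Z i)
    (ρ₁ ρ₂ ρ₃ ρ₄ : ℝ → ℝ) (C : ℝ),
    Monotone ρ₁ ∧ ProperFn ρ₁ ∧ Monotone ρ₂ ∧ ProperFn ρ₂ ∧
    Monotone ρ₃ ∧ ProperFn ρ₃ ∧ Monotone ρ₄ ∧ ProperFn ρ₄ ∧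
    (∀ i x x', e (σ i) (f i x) (f i x') ≤ ρ₁ (d i x x')) ∧
    (∀ i x x', ρ₂ (d i x x') ≤ e (σ i) (f i x) (f i x')) ∧
    (∀ i y y', d i (g i y) (g i y') ≤ ρ₃ (e (σ i) y y')) ∧
    (∀ i y y', ρ₄ (e (σ i) y y') ≤ d i (g i y) (g i y')) ∧
    (∀ i x, d i x (g i (f i x)) ≤ C) ∧ (∀ i y, e (σ i) y (f i (g i y)) ≤ C)

/-! ### Amenability (Følner) and elementary amenability -/

/-- Følner characterization of amenability for a countable discrete group. -/
def Amenable (G : Type*) [Group G] : Prop :=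
  ∀ (F : Finset G) (ε : ℝ), 0 < ε →
    ∃ S : Finset G, S.Nonempty ∧ ∀ g ∈ F,
      letI := Classical.decEq G
      (((S.image (fun s => g * s)) ∆ S).card : ℝ) ≤ ε * (S.card : ℝ)

/-- The class of elementary amenable groups: the smallest class of groups containing
the finite groups and the abelian groups and closed under extensions and directed
unions. -/
inductive IsElementaryAmenable : ∀ (G : Type u) [Group G], Prop where
  | of_finite (G : Type u) [Group G] (h : Finite G) : IsElementaryAmenable G
  | of_comm (G : Type u) [Group G] (h : ∀ a b : G, a * b = b * a) :
      IsElementaryAmenable G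
  | of_extension (N G Q : Type u) [Group N] [Group G] [Group Q]
      (φ : N →* G) (ψ : G →* Q) (hφ : Function.Injective φ)
      (hψ : Function.Surjective ψ) (hex : φ.range = ψ.ker)
      (hN : IsElementaryAmenable N) (hQ : IsElementaryAmenable Q) :
      IsElementaryAmenable G
  | of_directedUnion (G : Type u) [Group G] (ι : Type u) (K : ι → Subgroup G)
      (hdir : ∀ i j, ∃ k, K i ≤ K k ∧ K j ≤ K k)
      (hcover : ∀ g : G, ∃ i, g ∈ K i)
      (hK : ∀ i, IsElementaryAmenable ↥(K i)) : IsElementaryAmenable G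

/-!
Forward direction: pull a straight decomposition chain of the box space back to `G` along
the `K`-th slice `g ↦ [g] ∈ G ⧸ N_K`, which is `1`-Lipschitz. The final bounded pieces of the
box meet `G ⧸ N_K` in at most `V` points (`V` the size of a ball of `G`), so the pulled-back
pieces are unions of at most `V` cosets of `N_K`. These are peeled apart one coset at a time
(families with a single member are disjoint at every scale), and a single coset is finally cut
into points. That last cut is `N_K`-invariant, and it is `R`-disjoint once `K` is so large that
`N_K` has no non-trivial element of length `≤ R`.

Backward direction: invariance of the last step forces every earlier piece to be a union of
`N_K`-cosets, so each step projects to `G ⧸ N_i`, `i ≥ K`, without losing disjointness. The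
finitely many slices below a threshold `T ≥ K, R₀` form one bounded blob, and the remaining
slices are pairwise `T`-apart by the definition of the coarse disjoint union.
-/

section Chains

variable {α β : Type*} {d : α → α → ℝ}

def DecompChain (d : α → α → ℝ) (R : ℕ → ℝ) (m : ℕ) (𝒳 𝒵 : Set (Set α)) : Prop :=
  ∃ 𝒴 : ℕ → Set (Set α), 𝒴 0 = 𝒳 ∧ (∀ i < m, DecompS d (R i) (𝒴 i) (𝒴 (i + 1))) ∧ 𝒴 m = 𝒵

theorem DecompChain.refl (R : ℕ → ℝ) (𝒳 : Set (Set α)) : DecompChain d R 0 𝒳 𝒳 :=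
  ⟨fun _ => 𝒳, rfl, fun _ hi => absurd hi (Nat.not_lt_zero _), rfl⟩

theorem DecompChain.single {R : ℕ → ℝ} {𝒳 𝒴 : Set (Set α)} (h : DecompS d (R 0) 𝒳 𝒴) :
    DecompChain d R 1 𝒳 𝒴 := by
  refine ⟨fun j => if j = 0 then 𝒳 else 𝒴, rfl, fun i hi => ?_, rfl⟩
  obtain rfl : i = 0 := by omega
  simpa using h

theorem DecompChain.append {R : ℕ → ℝ} {a b : ℕ} {𝒳 𝒲 𝒵 : Set (Set α)}
    (h₁ : DecompChain d R a 𝒳 𝒲) (h₂ : DecompChain d (fun i => R (a + i)) b 𝒲 𝒵) :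
    DecompChain d R (a + b) 𝒳 𝒵 := by
  obtain ⟨𝒴₁, h0, hstep₁, ha⟩ := h₁
  obtain ⟨𝒴₂, rfl, hstep₂, rfl⟩ := h₂
  set 𝒴 : ℕ → Set (Set α) := fun j => if j ≤ a then 𝒴₁ j else 𝒴₂ (j - a)
  have hlow : ∀ j ≤ a, 𝒴 j = 𝒴₁ j := fun j hj => if_pos hj
  have hhigh : ∀ j, a ≤ j → 𝒴 j = 𝒴₂ (j - a) := by
    intro j hj
    rcases hj.eq_or_lt with rfl | hlt
    · rw [hlow a le_rfl, ha, Nat.sub_self]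
    · exact if_neg (not_le.2 hlt)
  refine ⟨𝒴, by rw [hlow 0 (Nat.zero_le a), h0], fun i hi => ?_, ?_⟩
  · rcases lt_or_ge i a with hia | hai
    · rw [hlow i hia.le, hlow (i + 1) hia]
      exact hstep₁ i hia
    · rw [hhigh i hai, hhigh (i + 1) (by omega), Nat.sub_add_comm hai]
      simpa only [Nat.add_sub_cancel' hai] using hstep₂ (i - a) (by omega)
  · rw [hhigh _ (Nat.le_add_right a b), Nat.add_sub_cancel_left]

theorem rDisjS_singleton (d : α → α → ℝ) (r : ℝ) (A : Set α) : rDisjS d r {A} :=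
  fun _ hA _ hB hne => absurd (hA.trans hB.symm) hne

theorem rDisjS.preimage {d' : β → β → ℝ} {f : α → β} (hf : ∀ x y, d' (f x) (f y) ≤ d x y)
    {r : ℝ} {P : Set (Set β)} (h : rDisjS d' r P) : rDisjS d r ((f ⁻¹' ·) '' P) := by
  rintro _ ⟨A, hA, rfl⟩ _ ⟨B, hB, rfl⟩ hne x hx y hy
  exact (h A hA B hB (fun hAB => hne (hAB ▸ rfl)) _ hx _ hy).trans (hf x y)

theorem DecompS.preimage {d' : β → β → ℝ} {f : α → β} (hf : ∀ x y, d' (f x) (f y) ≤ d x y)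
    {r : ℝ} {𝒳 𝒴 : Set (Set β)} (h : DecompS d' r 𝒳 𝒴) :
    DecompS d r ((f ⁻¹' ·) '' 𝒳) ((f ⁻¹' ·) '' 𝒴) := by
  rintro _ ⟨X, hX, rfl⟩
  obtain ⟨P₀, P₁, rfl, hd₀, hd₁, hmem⟩ := h X hX
  refine ⟨(f ⁻¹' ·) '' P₀, (f ⁻¹' ·) '' P₁, ?_, hd₀.preimage hf, hd₁.preimage hf, ?_⟩
  · simp only [preimage_union, preimage_sUnion, sUnion_image]
  · rintro _ (⟨A, hA, rfl⟩ | ⟨A, hA, rfl⟩)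
    exacts [⟨A, hmem A (Or.inl hA), rfl⟩, ⟨A, hmem A (Or.inr hA), rfl⟩]

theorem DecompChain.preimage {d' : β → β → ℝ} {f : α → β}
    (hf : ∀ x y, d' (f x) (f y) ≤ d x y) {R : ℕ → ℝ} {m : ℕ} {𝒳 𝒵 : Set (Set β)}
    (h : DecompChain d' R m 𝒳 𝒵) :
    DecompChain d R m ((f ⁻¹' ·) '' 𝒳) ((f ⁻¹' ·) '' 𝒵) := by
  obtain ⟨𝒴, rfl, hstep, rfl⟩ := h
  exact ⟨fun j => (f ⁻¹' ·) '' 𝒴 j, rfl, fun i hi => (hstep i hi).preimage hf, rfl⟩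

def smallPreimages (f : α → β) (n : ℕ) : Set (Set α) :=
  {X | ∃ S : Set β, S.encard ≤ n ∧ X = f ⁻¹' S}

theorem decompS_smallPreimages_succ (f : α → β) (d : α → α → ℝ) (r : ℝ) {n : ℕ}
    (hn : 1 ≤ n) : DecompS d r (smallPreimages f (n + 1)) (smallPreimages f n) := by
  rintro _ ⟨S, hS, rfl⟩
  rcases S.eq_empty_or_nonempty with rfl | ⟨z, hz⟩
  · refine ⟨{f ⁻¹' ∅}, {f ⁻¹' ∅}, by simp, rDisjS_singleton _ _ _, rDisjS_singleton _ _ _, ?_⟩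
    rintro _ (rfl | rfl) <;> exact ⟨∅, by simp, rfl⟩
  refine ⟨{f ⁻¹' {z}}, {f ⁻¹' (S \ {z})}, ?_, rDisjS_singleton _ _ _,
    rDisjS_singleton _ _ _, ?_⟩
  · rw [sUnion_singleton, sUnion_singleton, ← preimage_union,
      union_sdiff_cancel (singleton_subset_iff.2 hz)]
  · rintro _ (rfl | rfl)
    · exact ⟨{z}, by simpa using hn, rfl⟩
    · refine ⟨S \ {z}, ?_, rfl⟩
      rw [encard_sdiff_singleton_of_mem hz, tsub_le_iff_right]
      exact_mod_cast hS

theorem exists_decompChain_smallPreimages_one (f : α → β) (d : α → α → ℝ) :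
    ∀ (n : ℕ) (R : ℕ → ℝ) {𝒳 : Set (Set α)}, 𝒳 ⊆ smallPreimages f (n + 1) →
      ∃ 𝒲 ⊆ smallPreimages f 1, DecompChain d R n 𝒳 𝒲
  | 0, R, 𝒳, h𝒳 => ⟨𝒳, h𝒳, .refl R 𝒳⟩
  | n + 1, R, 𝒳, h𝒳 => by
    obtain ⟨𝒲, h𝒲, hchain⟩ :=
      exists_decompChain_smallPreimages_one f d n (fun i => R (1 + i)) subset_rfl
    have hpeel : DecompS d (R 0) 𝒳 (smallPreimages f (n + 1)) := fun X hX =>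
      decompS_smallPreimages_succ f d (R 0) (Nat.le_add_left 1 n) X (h𝒳 hX)
    exact ⟨𝒲, h𝒲, add_comm 1 n ▸ (DecompChain.single hpeel).append hchain⟩

end Chains

section Saturation

variable {G : Type*} [Group G] {H : Subgroup G} {d : G → G → ℝ} {r : ℝ}

def RSaturated (H : Subgroup G) (X : Set G) : Prop := ∀ x ∈ X, ∀ h ∈ H, x * h ∈ X

theorem rSaturated_preimage_mk (S : Set (G ⧸ H)) : RSaturated H (QuotientGroup.mk ⁻¹' S) :=
  fun x hx _ hh => by rwa [mem_preimage, QuotientGroup.mk_mul_of_mem x hh]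

theorem RSaturated.image_mul_right {X : Set G} (hX : RSaturated H X) {h : G} (hh : h ∈ H) :
    (fun g => g * h) '' X = X :=
  subset_antisymm (image_subset_iff.2 fun x hx => hX x hx h hh)
    fun x hx => ⟨x * h⁻¹, hX x hx _ (H.inv_mem hh), inv_mul_cancel_right x h⟩

theorem RInvFam.rSaturated_sUnion {P : Set (Set G)} (hP : RInvFam H P) :
    RSaturated H (⋃₀ P) :=
  fun x ⟨U, hU, hx⟩ h hh => ⟨_, hP U hU h hh, x, hx, rfl⟩

theorem PieceDecompInv.rSaturated {X : Set G} {𝒴 : Set (Set G)}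
    (h : PieceDecompInv d H r X 𝒴) : RSaturated H X := by
  obtain ⟨P₀, P₁, rfl, -, -, -, hI₀, hI₁⟩ := h
  rintro x (hx | hx) g hg
  exacts [Or.inl (hI₀.rSaturated_sUnion x hx g hg), Or.inr (hI₁.rSaturated_sUnion x hx g hg)]

theorem PieceDecomp.pieceDecompInv {X : Set G} {𝒴 : Set (Set G)} (h : PieceDecomp d r X 𝒴)
    (h𝒴 : ∀ Y ∈ 𝒴, RSaturated H Y) : PieceDecompInv d H r X 𝒴 := by
  obtain ⟨P₀, P₁, hX, hd₀, hd₁, hmem⟩ := h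
  have hinv : ∀ P ⊆ P₀ ∪ P₁, RInvFam H P := fun P hP U hU h hh => by
    rwa [(h𝒴 U (hmem U (hP hU))).image_mul_right hh]
  exact ⟨P₀, P₁, hX, hd₀, hd₁, hmem, hinv P₀ subset_union_left, hinv P₁ subset_union_right⟩

theorem DecompSInv.decompS {𝒳 𝒴 : Set (Set G)} (h : DecompSInv d H r 𝒳 𝒴) :
    DecompS d r 𝒳 𝒴 := fun X hX => by
  obtain ⟨P₀, P₁, hX, hd₀, hd₁, hmem, -⟩ := h X hX
  exact ⟨P₀, P₁, hX, hd₀, hd₁, hmem⟩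

/-- Invariance of the last step propagates backwards: it makes every earlier piece a union of
`H`-cosets. -/
theorem decompSInv_of_decompSInv_last {𝒴 : ℕ → Set (Set G)} {R : ℕ → ℝ} {m : ℕ}
    (hstep : ∀ i < m, DecompS d (R i) (𝒴 i) (𝒴 (i + 1)))
    (hlast : DecompSInv d H (R (m - 1)) (𝒴 (m - 1)) (𝒴 m)) :
    ∀ i < m, DecompSInv d H (R i) (𝒴 i) (𝒴 (i + 1)) := by
  have hsat : ∀ k i, i + k + 1 = m → ∀ X ∈ 𝒴 i, RSaturated H X := by
    intro k
    induction k with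
    | zero =>
      intro i hi X hX
      obtain rfl : i = m - 1 := by omega
      exact (hlast X hX).rSaturated
    | succ k ih =>
      intro i hi X hX
      exact ((hstep i (by omega) X hX).pieceDecompInv (ih (i + 1) (by omega))).rSaturated
  intro i hi
  rcases Nat.lt_or_ge (i + 1) m with hi' | hi'
  · exact fun X hX => (hstep i hi X hX).pieceDecompInv (hsat (m - i - 2) (i + 1) (by omega))
  · obtain rfl : i = m - 1 := by omega
    rwa [Nat.sub_add_cancel (by omega : 1 ≤ m)]

theorem pieceDecompInv_singletons {X : Set G} (hX : RSaturated H X)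
    (hsep : ∀ x ∈ X, ∀ y ∈ X, x ≠ y → r ≤ d x y) :
    PieceDecompInv d H r X {Y | Y.Subsingleton} := by
  refine ⟨(fun x => {x}) '' X, ∅, by simp, ?_, by simp [rDisjS], ?_, ?_, by simp [RInvFam]⟩
  · rintro _ ⟨x, hx, rfl⟩ _ ⟨y, hy, rfl⟩ hne _ rfl _ rfl
    exact hsep _ hx _ hy fun hxy => hne (hxy ▸ rfl)
  · rintro _ (⟨x, -, rfl⟩ | h)
    exacts [subsingleton_singleton, absurd h (notMem_empty _)]
  · rintro _ ⟨x, hx, rfl⟩ h hh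
    exact ⟨x * h, hX x hx h hh, by simp⟩

end Saturation

section LengthFunction

variable {G : Type*} [Group G] {l : G → ℝ}

theorem le_qdist {N : Subgroup G} {x y : G ⧸ N} {r : ℝ}
    (hr : ∀ g h : G, (g : G ⧸ N) = x → (h : G ⧸ N) = y → r ≤ dl l g h) :
    r ≤ qdist l N x y := by
  obtain ⟨g, rfl⟩ := QuotientGroup.mk_surjective x
  obtain ⟨h', rfl⟩ := QuotientGroup.mk_surjective y
  refine le_csInf ⟨dl l g h', g, h', rfl, rfl, rfl⟩ ?_
  rintro _ ⟨g, h, hg, hh, rfl⟩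
  exact hr g h hg hh

theorem qdist_nonneg (hl : IsLengthFunction l) (N : Subgroup G) (x y : G ⧸ N) :
    0 ≤ qdist l N x y :=
  le_qdist fun _ _ _ _ => hl.nonneg _

theorem qdist_le_dl (hl : IsLengthFunction l) (N : Subgroup G) (g h : G) :
    qdist l N g h ≤ dl l g h :=
  csInf_le ⟨0, by rintro _ ⟨g, h, -, -, rfl⟩; exact hl.nonneg _⟩ ⟨g, h, rfl, rfl, rfl⟩

theorem exists_mul_lt_of_qdist_lt {H : Subgroup G} [H.Normal] {a : G} {z : G ⧸ H} {r : ℝ}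
    (h : qdist l H a z < r) : ∃ w, l w < r ∧ ((a * w : G) : G ⧸ H) = z := by
  obtain ⟨g, rfl⟩ := QuotientGroup.mk_surjective z
  unfold qdist at h
  obtain ⟨_, ⟨g', h', hg', hh', rfl⟩, hlt⟩ :=
    exists_lt_of_csInf_lt (by exact ⟨dl l a g, a, g, rfl, rfl, rfl⟩) h
  refine ⟨g'⁻¹ * h', hlt, ?_⟩
  rw [QuotientGroup.mk_mul, ← hg', ← QuotientGroup.mk_mul, mul_inv_cancel_left, hh']

/-- A set of quotient-diameter `≤ C` in `G ⧸ H` injects into the ball of radius `C + 1`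
of `G`, through lifts of the differences to a fixed base point. -/
theorem encard_le_of_qdist_le {H : Subgroup G} [H.Normal] {S : Set (G ⧸ H)} {C : ℝ}
    (hS : ∀ z ∈ S, ∀ w ∈ S, qdist l H z w ≤ C) :
    S.encard ≤ {g : G | l g ≤ C + 1}.encard := by
  rcases S.eq_empty_or_nonempty with rfl | ⟨z₀, hz₀⟩
  · simp
  obtain ⟨a, rfl⟩ := QuotientGroup.mk_surjective z₀
  have hlift : ∀ z ∈ S, ∃ w, l w < C + 1 ∧ ((a * w : G) : G ⧸ H) = z := fun z hz =>
    exists_mul_lt_of_qdist_lt ((hS _ hz₀ z hz).trans_lt (lt_add_one C))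
  choose! w hw using hlift
  refine encard_le_encard_of_injOn (fun z hz => (hw z hz).1.le) fun z hz z' hz' hzz' => ?_
  rw [← (hw z hz).2, ← (hw z' hz').2, hzz']

theorem exists_index_length_gt (hl : IsLengthFunction l) {N : ℕ → Subgroup G}
    (hmono : Antitone N) (htriv : ∀ g : G, (∀ i, g ∈ N i) → g = 1) (r : ℝ) :
    ∃ K, ∀ n ∈ N K, n ≠ 1 → r < l n := by
  have hfin := (hl.proper r).sdiff (t := {1})
  have hout : ∀ g ∈ {g | l g ≤ r} \ {1}, ∃ i, g ∉ N i := fun g hg => by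
    by_contra! h
    exact hg.2 (htriv g h)
  choose! idx hidx using hout
  refine ⟨hfin.toFinset.sup idx, fun n hn hn1 => ?_⟩
  by_contra! hle
  have hmem : n ∈ {g | l g ≤ r} \ {1} := ⟨hle, hn1⟩
  exact hidx n hmem (hmono (Finset.le_sup (hfin.mem_toFinset.2 hmem)) hn)

theorem decompSInv_smallPreimages_one {H : Subgroup G} {r : ℝ}
    (hH : ∀ n ∈ H, n ≠ 1 → r ≤ l n) :
    DecompSInv (dl l) H r (smallPreimages (QuotientGroup.mk : G → G ⧸ H) 1)
      {X | X.Subsingleton} := by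
  rintro _ ⟨S, hS, rfl⟩
  refine pieceDecompInv_singletons (rSaturated_preimage_mk S) fun x hx y hy hxy => hH _ ?_ ?_
  · exact QuotientGroup.eq.1 (encard_le_one_iff.1 hS _ _ hx hy)
  · rwa [Ne, inv_mul_eq_one]

theorem bddS_subsingleton (hl : IsLengthFunction l) : BddS (dl l) {X : Set G | X.Subsingleton} :=
  ⟨0, fun _ hX _ hx _ hy => by rw [hX hx hy, dl, inv_mul_cancel, hl.len_one]⟩

end LengthFunction

section BoxSpace

variable {G : Type*} [Group G] {l : G → ℝ} {N : ℕ → Subgroup G}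

def toSlice (N : ℕ → Subgroup G) (i : ℕ) (g : G) : Σ j, G ⧸ N j := ⟨i, g⟩

theorem boxDist_mk (i : ℕ) (x y : G ⧸ N i) : boxDist l N ⟨i, x⟩ ⟨i, y⟩ = qdist l (N i) x y := by
  simp [boxDist, cuDist]

theorem boxDist_of_ne {i j : ℕ} (h : i ≠ j) (x : G ⧸ N i) (y : G ⧸ N j) :
    boxDist l N ⟨i, x⟩ ⟨j, y⟩ =
      diamD (qdist l (N i)) + diamD (qdist l (N j)) + (i : ℝ) + (j : ℝ) := by
  rw [boxDist, cuDist, dif_neg h]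

theorem diamD_qdist_nonneg (hl : IsLengthFunction l) (H : Subgroup G) :
    0 ≤ diamD (qdist l H) :=
  Real.sSup_nonneg (by rintro _ ⟨x, y, rfl⟩; exact qdist_nonneg hl H x y)

theorem toSlice_mul_of_mem {i : ℕ} {n : G} (hn : n ∈ N i) (g : G) :
    toSlice N i (g * n) = toSlice N i g := by
  rw [toSlice, QuotientGroup.mk_mul_of_mem g hn, toSlice]

theorem rDisjS_image_toSlice {H : Subgroup G} {i : ℕ} (hNH : N i ≤ H) {r : ℝ}
    {P : Set (Set G)} (hinv : RInvFam H P) (hP : rDisjS (dl l) r P) :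
    rDisjS (boxDist l N) r ((toSlice N i '' ·) '' P) := by
  have himage : ∀ {n}, n ∈ N i → ∀ U : Set G,
      toSlice N i '' ((fun g => g * n) '' U) = toSlice N i '' U := fun hn U => by
    simp only [image_image, toSlice_mul_of_mem hn]
  rintro _ ⟨U, hU, rfl⟩ _ ⟨U', hU', rfl⟩ hne _ ⟨u, hu, rfl⟩ _ ⟨v, hv, rfl⟩
  rw [toSlice, toSlice, boxDist_mk]
  refine le_qdist fun g h hg hh => ?_
  have hn₁ : u⁻¹ * g ∈ N i := QuotientGroup.eq.1 hg.symm
  have hn₂ : v⁻¹ * h ∈ N i := QuotientGroup.eq.1 hh.symm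
  refine hP _ (hinv U hU _ (hNH hn₁)) _ (hinv U' hU' _ (hNH hn₂)) (fun heq => hne ?_)
    g ⟨u, hu, mul_inv_cancel_left u g⟩ h ⟨v, hv, mul_inv_cancel_left v h⟩
  dsimp only
  rw [← himage hn₁, heq, himage hn₂]

theorem PieceDecompInv.image_toSlice {H : Subgroup G} {i : ℕ} (hNH : N i ≤ H) {r : ℝ}
    {X : Set G} {𝒴 : Set (Set G)} (h : PieceDecompInv (dl l) H r X 𝒴) :
    PieceDecomp (boxDist l N) r (toSlice N i '' X) ((toSlice N i '' ·) '' 𝒴) := by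
  obtain ⟨P₀, P₁, rfl, hd₀, hd₁, hmem, hI₀, hI₁⟩ := h
  refine ⟨(toSlice N i '' ·) '' P₀, (toSlice N i '' ·) '' P₁, ?_,
    rDisjS_image_toSlice hNH hI₀ hd₀, rDisjS_image_toSlice hNH hI₁ hd₁, ?_⟩
  · rw [image_union, image_sUnion, image_sUnion]
  · rintro _ (⟨A, hA, rfl⟩ | ⟨A, hA, rfl⟩)
    exacts [⟨A, hmem A (Or.inl hA), rfl⟩, ⟨A, hmem A (Or.inr hA), rfl⟩]

variable (N) in
def boxFam (T : ℕ) (𝒴 : Set (Set G)) : Set (Set (Σ i, G ⧸ N i)) :=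
  insert {p | p.1 < T} {Y | ∃ i, T ≤ i ∧ ∃ X ∈ 𝒴, Y = toSlice N i '' X}

theorem decompS_univ_boxFam (hl : IsLengthFunction l) {T : ℕ} {r : ℝ} (hT : r ≤ T) :
    DecompS (boxDist l N) r {univ} (boxFam N T {univ}) := by
  rintro _ rfl
  refine ⟨{{p | p.1 < T}}, {Y | ∃ i, T ≤ i ∧ Y = toSlice N i '' univ}, ?_,
    rDisjS_singleton _ _ _, ?_, ?_⟩
  · refine (eq_univ_of_forall fun ⟨i, z⟩ => ?_).symm
    rcases lt_or_ge i T with hi | hi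
    · exact Or.inl ⟨_, rfl, hi⟩
    · obtain ⟨g, rfl⟩ := QuotientGroup.mk_surjective z
      exact Or.inr ⟨_, ⟨i, hi, rfl⟩, g, trivial, rfl⟩
  · rintro _ ⟨i, hi, rfl⟩ _ ⟨j, -, rfl⟩ hne _ ⟨g, -, rfl⟩ _ ⟨h, -, rfl⟩
    have hij : i ≠ j := by rintro rfl; exact hne rfl
    rw [toSlice, toSlice, boxDist_of_ne hij]
    have hTi : (T : ℝ) ≤ i := by exact_mod_cast hi
    linarith [diamD_qdist_nonneg hl (N i), diamD_qdist_nonneg hl (N j),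
      (Nat.cast_nonneg j : (0 : ℝ) ≤ j)]
  · rintro _ (rfl | ⟨i, hi, rfl⟩)
    exacts [Or.inl rfl, Or.inr ⟨i, hi, univ, rfl, rfl⟩]

theorem DecompSInv.boxFam {H : Subgroup G} {T : ℕ} (hT : ∀ i, T ≤ i → N i ≤ H) {r : ℝ}
    {𝒳 𝒴 : Set (Set G)} (h : DecompSInv (dl l) H r 𝒳 𝒴) :
    DecompS (boxDist l N) r (boxFam N T 𝒳) (boxFam N T 𝒴) := by
  rintro _ (rfl | ⟨i, hi, X, hX, rfl⟩)
  · exact ⟨_, _, (union_self _).symm.trans (by rw [sUnion_singleton]),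
      rDisjS_singleton _ _ _, rDisjS_singleton _ _ _, fun A hA => Or.inl (by simpa using hA)⟩
  · obtain ⟨P₀, P₁, hcov, hd₀, hd₁, hmem⟩ := (h X hX).image_toSlice (hT i hi)
    refine ⟨P₀, P₁, hcov, hd₀, hd₁, fun A hA => Or.inr ?_⟩
    obtain ⟨Y, hY, rfl⟩ := hmem A hA
    exact ⟨i, hi, Y, hY, rfl⟩

theorem finite_lt_slices (hfin : ∀ i, (N i).FiniteIndex) (T : ℕ) :
    {p : Σ i, G ⧸ N i | p.1 < T}.Finite :=
  (finite_Iio T).preimage' fun i _ => by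
    have := hfin i
    refine (finite_range fun z : G ⧸ N i => (⟨i, z⟩ : Σ j, G ⧸ N j)).subset ?_
    rintro ⟨j, z⟩ rfl
    exact ⟨z, rfl⟩

theorem bddS_boxFam (hl : IsLengthFunction l) (hfin : ∀ i, (N i).FiniteIndex) {T : ℕ}
    {𝒴 : Set (Set G)} (h : BddS (dl l) 𝒴) : BddS (boxDist l N) (boxFam N T 𝒴) := by
  obtain ⟨C, hC⟩ := h
  obtain ⟨C', hC'⟩ := ((finite_lt_slices hfin T).prod (finite_lt_slices hfin T)).image
    (fun p => boxDist l N p.1 p.2) |>.bddAbove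
  refine ⟨max C' C, ?_⟩
  rintro _ (rfl | ⟨i, -, X, hX, rfl⟩) x hx y hy
  · exact (hC' ⟨(x, y), ⟨hx, hy⟩, rfl⟩).trans (le_max_left _ _)
  · obtain ⟨g, hg, rfl⟩ := hx
    obtain ⟨h, hh, rfl⟩ := hy
    rw [toSlice, toSlice, boxDist_mk]
    exact (qdist_le_dl hl _ g h).trans ((hC X hX g hg h hh).trans (le_max_right _ _))

end BoxSpace

section MainDirections

variable {G : Type*} [Group G] {l : G → ℝ} {N : ℕ → Subgroup G}

theorem equivSFDC_of_decompChain {d : G → G → ℝ}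
    (h : ∀ R : ℕ → ℝ, (∀ n, 0 < R n) → StrictMono R →
      ∃ (m K : ℕ) (𝒲 𝒵 : Set (Set G)), DecompChain d R m {univ} 𝒲 ∧
        DecompSInv d (N K) (R m) 𝒲 𝒵 ∧ BddS d 𝒵) :
    EquivSFDC d N := by
  intro R hRpos hRmono
  obtain ⟨m, K, 𝒲, 𝒵, ⟨𝒴, h0, hstep, rfl⟩, hinv, hbdd⟩ := h R hRpos hRmono
  refine ⟨m + 1, K, m.succ_pos, fun j => if j ≤ m then 𝒴 j else 𝒵, by simpa using h0,
    fun i hi => ?_, by simpa using hbdd, by simpa using hinv⟩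
  rcases Nat.lt_or_ge i m with him | him
  · simpa [him.le, Nat.succ_le_of_lt him] using hstep i him
  · obtain rfl : i = m := by omega
    simpa using hinv.decompS

theorem equivSFDC_of_spaceSFDC_boxDist (hl : IsLengthFunction l)
    (hnorm : ∀ i, (N i).Normal) (hmono : Antitone N)
    (htriv : ∀ g : G, (∀ i, g ∈ N i) → g = 1) (h : SpaceSFDC (boxDist l N)) :
    EquivSFDC (dl l) N := by
  refine equivSFDC_of_decompChain fun R hRpos hRmono => ?_
  obtain ⟨M, ℬ, hℬ0, hstep, C, hC⟩ := h R hRpos hRmono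
  set V := {g : G | l g ≤ C + 1}.ncard
  obtain ⟨K, hK⟩ := exists_index_length_gt hl hmono htriv (R (M + V))
  have hpull : DecompChain (dl l) R M {univ} ((toSlice N K ⁻¹' ·) '' ℬ M) := by
    have hlip : ∀ g h, boxDist l N (toSlice N K g) (toSlice N K h) ≤ dl l g h := fun g h => by
      rw [toSlice, toSlice, boxDist_mk]
      exact qdist_le_dl hl _ g h
    simpa using DecompChain.preimage hlip ⟨ℬ, hℬ0, hstep, rfl⟩
  have hsmall :
      (toSlice N K ⁻¹' ·) '' ℬ M ⊆ smallPreimages (QuotientGroup.mk : G → G ⧸ N K) (V + 1) := by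
    rintro _ ⟨A, hA, rfl⟩
    refine ⟨{z | ⟨K, z⟩ ∈ A}, ?_, rfl⟩
    have := hnorm K
    calc {z : G ⧸ N K | ⟨K, z⟩ ∈ A}.encard ≤ {g : G | l g ≤ C + 1}.encard :=
          encard_le_of_qdist_le fun z hz w hw => boxDist_mk (l := l) K z w ▸ hC A hA _ hz _ hw
      _ = V := (hl.proper _).cast_ncard_eq.symm
      _ ≤ (V + 1 : ℕ) := by exact_mod_cast V.le_succ
  obtain ⟨𝒲, h𝒲, hpeel⟩ :=
    exists_decompChain_smallPreimages_one _ (dl l) V (fun i => R (M + i)) hsmall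
  exact ⟨M + V, K, 𝒲, _, hpull.append hpeel,
    fun X hX => decompSInv_smallPreimages_one (fun n hn hn1 => (hK n hn hn1).le) X (h𝒲 hX),
    bddS_subsingleton hl⟩

theorem spaceSFDC_boxDist_of_equivSFDC (hl : IsLengthFunction l) (hmono : Antitone N)
    (hfin : ∀ i, (N i).FiniteIndex) (h : EquivSFDC (dl l) N) :
    SpaceSFDC (boxDist l N) := by
  intro R hRpos hRmono
  obtain ⟨m, K, -, 𝒴, h𝒴0, hstep, hbdd, hlast⟩ :=
    h (fun n => R (n + 1)) (fun n => hRpos _) fun a b hab => hRmono (Nat.succ_lt_succ hab)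
  obtain ⟨T, hKT, hRT⟩ : ∃ T : ℕ, K ≤ T ∧ R 0 ≤ T :=
    ⟨max K ⌈R 0⌉₊, le_max_left _ _, (Nat.le_ceil _).trans (by exact_mod_cast le_max_right _ _)⟩
  have hinv := decompSInv_of_decompSInv_last hstep hlast
  refine ⟨m + 1, fun | 0 => {univ} | s + 1 => boxFam N T (𝒴 s), rfl, fun s hs => ?_,
    bddS_boxFam hl hfin hbdd⟩
  cases s with
  | zero => simpa [h𝒴0] using decompS_univ_boxFam hl hRT
  | succ s => exact (hinv s (by omega)).boxFam fun i hi => hmono (hKT.trans hi)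

end MainDirections

theorem boxSpace_sfdc_iff_equivariant_sfdc_general {G : Type*} [Group G]
    (l : G → ℝ) (hl : IsLengthFunction l) (N : ℕ → Subgroup G)
    (hnorm : ∀ i, (N i).Normal) (hmono : ∀ i, N (i + 1) ≤ N i)
    (hfin : ∀ i, (N i).FiniteIndex) (htriv : ∀ g : G, (∀ i, g ∈ N i) → g = 1) :
    SpaceSFDC (boxDist l N) ↔ EquivSFDC (dl l) N :=
  ⟨equivSFDC_of_spaceSFDC_boxDist hl hnorm (antitone_nat_of_succ_le hmono) htriv,
    spaceSFDC_boxDist_of_equivSFDC hl (antitone_nat_of_succ_le hmono) hfin⟩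

/-- Theorem 2: the box space `□_{Nᵢ} G` has straight FDC iff `G`
has equi-variant straight FDC with respect to `{Nᵢ}`. -/
theorem boxSpace_sfdc_iff_equivariant_sfdc {G : Type*} [Group G] [Countable G]
    (l : G → ℝ) (hl : IsLengthFunction l) (N : ℕ → Subgroup G)
    (hnorm : ∀ i, (N i).Normal) (hmono : ∀ i, N (i + 1) ≤ N i) (h0 : N 0 = ⊤)
    (hfin : ∀ i, (N i).FiniteIndex) (htriv : ∀ g : G, (∀ i, g ∈ N i) → g = 1) :
    SpaceSFDC (boxDist l N) ↔ EquivSFDC (dl l) N :=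
  boxSpace_sfdc_iff_equivariant_sfdc_general l hl N hnorm hmono hfin htriv

end FDCPaper
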